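/- Let S be a string of length N represented by an SLP, and let q ≥ 2. Every substring of S of length q is a substring of t_i for some variable X_i → X_{ℓ(i)} X_{r(i)} with |val(X_i)| ≥ q, where t_i = suf(val(X_{ℓ(i)}), q−1) · pre(val(X_{r(i)}), q−1). -/

import Mathlib

/-- A straight line program (SLP): variables are indexed `0, 1, 2, …` (variable `i`
corresponds to `X_{i+1}` in 1-based notation); each rule is either a terminal character
or a concatenation of two variables with strictly smaller indices. The SLP has `n`
variables `0, …, n-1` and represents `val (n-1)`. -/
structure SLP (α : Type*) where
  n : ℕ
  rule : ℕ → α ⊕ (ℕ × ℕ)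
  valid : ∀ i l r, rule i = Sum.inr (l, r) → l < i ∧ r < i

/-- The string derived from variable `i` of the SLP. -/
def SLP.val {α : Type*} (P : SLP α) (i : ℕ) : List α :=
  match h : P.rule i with
  | Sum.inl a => [a]
  | Sum.inr (l, r) =>
    have _hv := P.valid i l r h
    P.val l ++ P.val r
termination_by i
decreasing_by
  · exact _hv.1
  · exact _hv.2

/-!
A length-`q` occurrence in `S` is stabbed by the deepest node of the derivation tree whose
interval contains it. Concretely, we descend from the root: at a node `X → Y Z` the occurrence
lies inside `val Y`, inside `val Z`, or it crosses the boundary. In the last case it splits as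
a nonempty suffix of `val Y` followed by a nonempty prefix of `val Z`, each of length at most
`q - 1`, so it lies in `suf(val Y, q-1) · pre(val Z, q-1)`. Since `q ≥ 2` the descent never
reaches a terminal rule.
-/

namespace List

variable {α : Type*}

/-- The paper's `t_i` is `boundaryWindow (val X_ℓ(i)) (val X_r(i)) (q - 1)`. -/
def boundaryWindow (A B : List α) (k : ℕ) : List α :=
  A.drop (A.length - k) ++ B.take k

theorem IsSuffix.isSuffix_drop_length_sub {u A : List α} {k : ℕ} (h : u <:+ A)
    (hk : u.length ≤ k) : u <:+ A.drop (A.length - k) := by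
  rw [suffix_iff_eq_drop.mp h]
  exact drop_suffix_drop_left A (by omega)

theorem append_infix_boundaryWindow {u v A B : List α} {k : ℕ} (hu : u <:+ A)
    (hv : v <+: B) (huk : u.length ≤ k) (hvk : v.length ≤ k) :
    u ++ v <:+: boundaryWindow A B k := by
  obtain ⟨s, hs⟩ := hu.isSuffix_drop_length_sub huk
  obtain ⟨t, ht⟩ := prefix_take_iff.mpr ⟨hv, hvk⟩
  exact ⟨s, t, by rw [boundaryWindow, ← hs, ← ht, append_assoc, append_assoc, append_assoc]⟩

theorem infix_append_cases {w A B : List α} {k : ℕ} (h : w <:+: A ++ B)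
    (hw : w.length ≤ k + 1) :
    w <:+: A ∨ w <:+: B ∨ w <:+: boundaryWindow A B k := by
  obtain ⟨s, t, hst⟩ := h
  rw [append_assoc, eq_comm, append_eq_append_iff] at hst
  rcases hst with ⟨s', rfl, hB⟩ | ⟨u, rfl, hwt⟩
  · exact Or.inr (Or.inl ⟨s', t, by rw [hB, append_assoc]⟩)
  rw [append_eq_append_iff] at hwt
  rcases hwt with ⟨v, rfl, rfl⟩ | ⟨v, rfl, rfl⟩
  · exact Or.inl ⟨s, v, by rw [append_assoc]⟩
  obtain rfl | hu := eq_or_ne u []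
  · exact Or.inr (Or.inl ⟨[], t, by simp⟩)
  obtain rfl | hv := eq_or_ne v []
  · exact Or.inl ⟨s, [], by simp⟩
  have := length_pos_iff.mpr hu
  have := length_pos_iff.mpr hv
  rw [length_append] at hw
  exact Or.inr (Or.inr (append_infix_boundaryWindow (suffix_append s u) (prefix_append v t)
    (by omega) (by omega)))

end List

namespace SLP

variable {α : Type*} (P : SLP α)

theorem val_of_rule_inl {i : ℕ} {a : α} (h : P.rule i = Sum.inl a) : P.val i = [a] := by
  rw [SLP.val]; split <;> simp_all

theorem val_of_rule_inr {i l r : ℕ} (h : P.rule i = Sum.inr (l, r)) :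
    P.val i = P.val l ++ P.val r := by
  rw [SLP.val]; split <;> simp_all

theorem exists_rule_inr_infix_boundaryWindow {q : ℕ} (hq : 2 ≤ q) (i : ℕ) {w : List α}
    (hw : w.length = q) (hwi : w <:+: P.val i) :
    ∃ j ≤ i, ∃ l r, P.rule j = Sum.inr (l, r) ∧ q ≤ (P.val j).length ∧
      w <:+: List.boundaryWindow (P.val l) (P.val r) (q - 1) := by
  induction i using Nat.strong_induction_on with
  | _ i ih =>
    have hlen : q ≤ (P.val i).length := hw ▸ hwi.length_le
    rcases hrule : P.rule i with a | ⟨l, r⟩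
    · rw [P.val_of_rule_inl hrule, List.length_singleton] at hlen
      omega
    obtain ⟨hl, hr⟩ := P.valid i l r hrule
    rw [P.val_of_rule_inr hrule] at hwi
    rcases List.infix_append_cases hwi (k := q - 1) (by omega) with h | h | h
    · obtain ⟨j, hj, hj_window⟩ := ih l hl h
      exact ⟨j, by omega, hj_window⟩
    · obtain ⟨j, hj, hj_window⟩ := ih r hr h
      exact ⟨j, by omega, hj_window⟩
    · exact ⟨i, le_rfl, l, r, hrule, hlen, h⟩

end SLP

/-- every length-`q` substring of the represented string `S` (with `q ≥ 2`)
is a substring of `t_i = suf(val l, q−1) ++ pre(val r, q−1)` for some variable `i < n`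
with rule `X_i → X_l X_r` and `|val i| ≥ q`. -/
theorem slp_partial_decompression {α : Type*} (P : SLP α) (hn : 1 ≤ P.n)
    (q : ℕ) (hq : 2 ≤ q) :
    ∀ sub : List α, sub.length = q → sub <:+: P.val (P.n - 1) →
      ∃ i < P.n, ∃ l r, P.rule i = Sum.inr (l, r) ∧ q ≤ (P.val i).length ∧
        sub <:+: ((P.val l).drop ((P.val l).length - (q - 1)) ++ (P.val r).take (q - 1)) := by
  intro sub hlen hsub
  obtain ⟨i, hi, l, r, hrule, hlen_i, hwin⟩ :=
    P.exists_rule_inr_infix_boundaryWindow hq (P.n - 1) hlen hsub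
  exact ⟨i, by omega, l, r, hrule, hlen_i, hwin⟩
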